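/- The Lotka–Volterra type system is Hamiltonian with respect to the Poisson matrix π1: for all (x,y,z) ∈ ℝ³, the matrix–vector product π1(x,y,z) · ∇H2(x,y,z) equals the vector field (x(by+cz), y(ax−by+cz), z(−ax+by−cz)), where H2(x,y,z) = x(ax−2by+2cz) and ∇H2(x,y,z) = (2ax−2by+2cz, −2bx, 2cx). -/

import Mathlib

theorem pi1_gradH2_eq_vector_field (a b c : ℝ) (x y z : ℝ) :
    (!![0, -y / 2, z / 2;
        y / 2, 0, 0;
        -z / 2, 0, 0] : Matrix (Fin 3) (Fin 3) ℝ).mulVec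
      ![2 * a * x - 2 * b * y + 2 * c * z, -(2 * b * x), 2 * c * x]
    = ![x * (b * y + c * z),
        y * (a * x - b * y + c * z),
        z * (-(a * x) + b * y - c * z)] := by
  ext i
  fin_cases i <;>
    simp only [Matrix.mulVec, Matrix.of_apply, Matrix.vec3_dotProduct, Fin.isValue, Fin.reduceFinMk,
      Matrix.cons_val_zero, Matrix.cons_val_one, Matrix.cons_val_two, Matrix.head_cons,
      Matrix.tail_cons] <;>
    ring
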